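/- The restriction of ψ to the set {(z,w) ∈ ℂ^p × ℂ^q : Φ̃(z,w) = 0, z ≠ 0 and w ≠ 0} is a bijection onto μ⁻¹(0) \ {(0,0)}. (This is the local statement that the perturbed quotient resolves the singular symplectic quotient: the blow-down map ψ restricted to the perturbed level set is one-to-one and onto the punctured zero level set of μ.) -/

import Mathlib

/-- The weighted square norm `|z|²_c = ∑ c_j |z_j|²` on `ℂ^n`. -/
noncomputable def wnorm {n : ℕ} (c : Fin n → ℕ) (z : Fin n → ℂ) : ℝ :=
  ∑ j, (c j : ℝ) * ‖z j‖ ^ 2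

/-- The function `μ(z,w) = |z|²_a − |w|²_b` on `ℂ^p × ℂ^q`. -/
noncomputable def mu {p q : ℕ} (a : Fin p → ℕ) (b : Fin q → ℕ)
    (x : (Fin p → ℂ) × (Fin q → ℂ)) : ℝ :=
  wnorm a x.1 - wnorm b x.2

/-- `N(z,w) = |z|²_a + |w|²_b`. -/
noncomputable def Nfun {p q : ℕ} (a : Fin p → ℕ) (b : Fin q → ℕ)
    (x : (Fin p → ℂ) × (Fin q → ℂ)) : ℝ :=
  wnorm a x.1 + wnorm b x.2

/-- The perturbed moment map `Φ̃(z,w) = μ(z,w) + ε·ρ(N(z,w))`. -/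
noncomputable def Phit {p q : ℕ} (a : Fin p → ℕ) (b : Fin q → ℕ) (ε : ℝ) (ρ : ℝ → ℝ)
    (x : (Fin p → ℂ) × (Fin q → ℂ)) : ℝ :=
  mu a b x + ε * ρ (Nfun a b x)

open Classical in
/-- The blow-down map
`ψ(z,w) = ((|w|²_b/|z|²_a)^{1/4}·z, (|z|²_a/|w|²_b)^{1/4}·w)` for `z ≠ 0` and
`w ≠ 0`, and `ψ(z,w) = (0,0)` if `z = 0` or `w = 0`. -/
noncomputable def psi {p q : ℕ} (a : Fin p → ℕ) (b : Fin q → ℕ)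
    (x : (Fin p → ℂ) × (Fin q → ℂ)) : (Fin p → ℂ) × (Fin q → ℂ) :=
  if x.1 ≠ 0 ∧ x.2 ≠ 0 then
    (((wnorm b x.2 / wnorm a x.1) ^ ((1 : ℝ) / 4)) • x.1,
     ((wnorm a x.1 / wnorm b x.2) ^ ((1 : ℝ) / 4)) • x.2)
  else (0, 0)

lemma wnorm_nonneg {n : ℕ} (c : Fin n → ℕ) (z : Fin n → ℂ) : 0 ≤ wnorm c z :=
  Finset.sum_nonneg fun j _ => by positivity

lemma wnorm_smul {n : ℕ} (c : Fin n → ℕ) (r : ℝ) (z : Fin n → ℂ) :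
    wnorm c (r • z) = r ^ 2 * wnorm c z := by
  unfold wnorm
  rw [Finset.mul_sum]
  refine Finset.sum_congr rfl fun j _ => ?_
  simp only [Pi.smul_apply, norm_smul, Real.norm_eq_abs, mul_pow, sq_abs]
  ring

lemma wnorm_eq_zero_iff {n : ℕ} {c : Fin n → ℕ} (hc : ∀ j, 0 < c j) (z : Fin n → ℂ) :
    wnorm c z = 0 ↔ z = 0 := by
  constructor
  · intro h
    funext j
    have h0 : ∀ i ∈ Finset.univ, (0:ℝ) ≤ (c i : ℝ) * ‖z i‖ ^ 2 := fun i _ => by positivity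
    have hj := (Finset.sum_eq_zero_iff_of_nonneg h0).mp h j (Finset.mem_univ j)
    have hcj : (0:ℝ) < c j := by exact_mod_cast hc j
    have hz2 : ‖z j‖ ^ 2 = 0 := by
      rcases mul_eq_zero.mp hj with h' | h'
      · exact absurd h' (ne_of_gt hcj)
      · exact h'
    have : ‖z j‖ = 0 := by
      nlinarith [norm_nonneg (z j)]
    simpa using this
  · rintro rfl; simp [wnorm]

lemma wnorm_pos {n : ℕ} {c : Fin n → ℕ} (hc : ∀ j, 0 < c j) {z : Fin n → ℂ}
    (hz : z ≠ 0) : 0 < wnorm c z :=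
  lt_of_le_of_ne (wnorm_nonneg c z) fun h => hz ((wnorm_eq_zero_iff hc z).mp h.symm)

lemma lip_aux {ε : ℝ} {ρ : ℝ → ℝ} (hρ : ContDiff ℝ (⊤ : ℕ∞) ρ)
    (hερ' : ∀ t, |ε * deriv ρ t| < 1) (x y : ℝ) :
    |ε * ρ x - ε * ρ y| ≤ |x - y| := by
  have hd : Differentiable ℝ (fun t => ε * ρ t) :=
    (hρ.differentiable (by simp)).const_mul ε
  have hL : LipschitzWith 1 (fun t => ε * ρ t) := by
    apply lipschitzWith_of_nnnorm_deriv_le hd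
    intro t
    have hdt : deriv (fun t => ε * ρ t) t = ε * deriv ρ t :=
      deriv_const_mul ε ((hρ.differentiable (by simp)) t)
    rw [hdt, ← NNReal.coe_le_coe]
    simpa [Real.norm_eq_abs, ← abs_mul] using (hερ' t).le
  have := hL.dist_le_mul x y
  simpa [Real.dist_eq] using this

lemma pos_pow4_eq_one {x : ℝ} (hx : 0 < x) (h : x ^ (4:ℕ) = 1) : x = 1 := by
  have h2 : x ^ 2 = 1 := by
    have h' : (x ^ 2 - 1) * (x ^ 2 + 1) = 0 := by linear_combination h
    rcases mul_eq_zero.mp h' with h'' | h''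
    · linarith
    · nlinarith [sq_nonneg x]
  have h3 : (x - 1) * (x + 1) = 0 := by linear_combination h2
  rcases mul_eq_zero.mp h3 with h'' | h'' <;> linarith

lemma rpow_quarter_pow4 {x : ℝ} (hx : 0 ≤ x) : (x ^ ((1:ℝ)/4)) ^ (4:ℕ) = x := by
  rw [← Real.rpow_natCast (x ^ ((1:ℝ)/4)) 4, ← Real.rpow_mul hx]
  norm_num

lemma hmono_aux {ε : ℝ} {ρ : ℝ → ℝ}
    (hLip : ∀ x y : ℝ, |ε * ρ x - ε * ρ y| ≤ |x - y|)
    {A B : ℝ} (hA : 0 < A) (hB : 0 < B) :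
    StrictMonoOn (fun u : ℝ => u * A - B / u + ε * ρ (u * A + B / u)) (Set.Ioi 0) := by
  intro u₁ hu₁ u₂ hu₂ h12
  simp only [Set.mem_Ioi] at hu₁ hu₂
  have hP : 0 < (u₂ - u₁) * A := by nlinarith
  have hQ : 0 < B / u₁ - B / u₂ := by
    have : B / u₂ < B / u₁ := by
      apply div_lt_div_of_pos_left hB hu₁ h12
    linarith
  have hl := hLip (u₂ * A + B / u₂) (u₁ * A + B / u₁)
  have hN : (u₂ * A + B / u₂) - (u₁ * A + B / u₁) = (u₂ - u₁) * A - (B / u₁ - B / u₂) := by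
    ring
  rw [hN] at hl
  have habs : |(u₂ - u₁) * A - (B / u₁ - B / u₂)| < (u₂ - u₁) * A + (B / u₁ - B / u₂) := by
    rw [abs_lt]; constructor <;> nlinarith
  have h2 := abs_le.mp hl
  show u₁ * A - B / u₁ + ε * ρ (u₁ * A + B / u₁) < u₂ * A - B / u₂ + ε * ρ (u₂ * A + B / u₂)
  linarith [h2.1]

lemma psi_eq {p q : ℕ} (a : Fin p → ℕ) (b : Fin q → ℕ) {x : (Fin p → ℂ) × (Fin q → ℂ)}
    (hz : x.1 ≠ 0) (hw : x.2 ≠ 0) :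
    psi a b x = (((wnorm b x.2 / wnorm a x.1) ^ ((1:ℝ)/4)) • x.1,
      (((wnorm b x.2 / wnorm a x.1) ^ ((1:ℝ)/4))⁻¹) • x.2) := by
  unfold psi
  rw [if_pos ⟨hz, hw⟩]
  have h1 : wnorm a x.1 / wnorm b x.2 = (wnorm b x.2 / wnorm a x.1)⁻¹ := (inv_div _ _).symm
  rw [h1, Real.inv_rpow (div_nonneg (wnorm_nonneg _ _) (wnorm_nonneg _ _))]

set_option maxHeartbeats 1600000

/-- The restriction of `ψ` to `{Φ̃ = 0, z ≠ 0, w ≠ 0}` is a bijection onto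
`μ⁻¹(0) \ {(0,0)}`. -/
theorem stmt_14 {p q : ℕ} (hp : 1 ≤ p) (hq : 1 ≤ q)
    (a : Fin p → ℕ) (b : Fin q → ℕ) (ha : ∀ j, 0 < a j) (hb : ∀ j, 0 < b j)
    (δ ε : ℝ) (hδ : 0 < δ) (hε : ε ≠ 0) (hεδ : |ε| < δ)
    (ρ : ℝ → ℝ) (hρ : ContDiff ℝ (⊤ : ℕ∞) ρ)
    (hρ0 : ∀ t, 0 ≤ ρ t) (hρ1 : ∀ t, ρ t ≤ 1)
    (hρlt : ∀ t < δ, ρ t = 1) (hρgt : ∀ t, 2 * δ < t → ρ t = 0)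
    (hρ' : ∀ t, deriv ρ t ≤ 0) (hερ' : ∀ t, |ε * deriv ρ t| < 1) :
    Set.BijOn (psi a b)
      {x : (Fin p → ℂ) × (Fin q → ℂ) | Phit a b ε ρ x = 0 ∧ x.1 ≠ 0 ∧ x.2 ≠ 0}
      (mu a b ⁻¹' {0} \ {((0 : Fin p → ℂ), (0 : Fin q → ℂ))}) := by
  have hLip : ∀ x y : ℝ, |ε * ρ x - ε * ρ y| ≤ |x - y| := lip_aux hρ hερ'
  have hρabs : ∀ t, |ε * ρ t| ≤ |ε| := by
    intro t
    rw [abs_mul]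
    have h1 : |ρ t| ≤ 1 := abs_le.mpr ⟨by linarith [hρ0 t], hρ1 t⟩
    nlinarith [abs_nonneg ε]
  refine ⟨?_, ?_, ?_⟩
  · -- MapsTo
    rintro x ⟨hx0, hz, hw⟩
    have hA : 0 < wnorm a x.1 := wnorm_pos ha hz
    have hB : 0 < wnorm b x.2 := wnorm_pos hb hw
    set A := wnorm a x.1 with hAdef
    set B := wnorm b x.2 with hBdef
    set σ := (B / A) ^ ((1:ℝ)/4) with hσdef
    have hσpos : 0 < σ := Real.rpow_pos_of_pos (by positivity) _
    have hσ4 : σ ^ (4:ℕ) = B / A := rpow_quarter_pow4 (by positivity)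
    have hψ := psi_eq a b hz hw
    constructor
    · show psi a b x ∈ mu a b ⁻¹' {0}
      simp only [Set.mem_preimage, Set.mem_singleton_iff]
      rw [hψ]
      show wnorm a (σ • x.1) - wnorm b (σ⁻¹ • x.2) = 0
      rw [wnorm_smul, wnorm_smul, ← hAdef, ← hBdef]
      have h4 : σ ^ 4 * A = B := by
        rw [hσ4]; field_simp
      field_simp
      linear_combination h4
    · simp only [Set.mem_singleton_iff]
      intro hcon
      rw [hψ] at hcon
      have h1 : σ • x.1 = 0 := congrArg Prod.fst hcon
      exact (smul_ne_zero hσpos.ne' hz) h1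
  · -- InjOn
    rintro x ⟨hx0, hz, hw⟩ y ⟨hy0, hz', hw'⟩ hxy
    have hA : 0 < wnorm a x.1 := wnorm_pos ha hz
    have hB : 0 < wnorm b x.2 := wnorm_pos hb hw
    have hA' : 0 < wnorm a y.1 := wnorm_pos ha hz'
    have hB' : 0 < wnorm b y.2 := wnorm_pos hb hw'
    set t := (wnorm b x.2 / wnorm a x.1) ^ ((1:ℝ)/4) with htdef
    set t' := (wnorm b y.2 / wnorm a y.1) ^ ((1:ℝ)/4) with ht'def
    have ht : 0 < t := Real.rpow_pos_of_pos (by positivity) _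
    have ht' : 0 < t' := Real.rpow_pos_of_pos (by positivity) _
    rw [psi_eq a b hz hw, psi_eq a b hz' hw'] at hxy
    have h1 : t • x.1 = t' • y.1 := congrArg Prod.fst hxy
    have h2 : t⁻¹ • x.2 = t'⁻¹ • y.2 := congrArg Prod.snd hxy
    set lam := t'⁻¹ * t with hlamdef
    have hlam : 0 < lam := by positivity
    have hy1 : y.1 = lam • x.1 := by
      calc y.1 = (t'⁻¹ * t') • y.1 := by rw [inv_mul_cancel₀ ht'.ne', one_smul]
        _ = t'⁻¹ • (t' • y.1) := by rw [smul_smul]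
        _ = t'⁻¹ • (t • x.1) := by rw [← h1]
        _ = lam • x.1 := by rw [smul_smul]
    have hy2 : y.2 = lam⁻¹ • x.2 := by
      calc y.2 = (t' * t'⁻¹) • y.2 := by rw [mul_inv_cancel₀ ht'.ne', one_smul]
        _ = t' • (t'⁻¹ • y.2) := by rw [smul_smul]
        _ = t' • (t⁻¹ • x.2) := by rw [← h2]
        _ = lam⁻¹ • x.2 := by rw [smul_smul, hlamdef, mul_inv, inv_inv, mul_comm]
    set A := wnorm a x.1
    set B := wnorm b x.2
    have hwy1 : wnorm a y.1 = lam ^ 2 * A := by rw [hy1, wnorm_smul]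
    have hwy2 : wnorm b y.2 = B / lam ^ 2 := by
      rw [hy2, wnorm_smul, inv_pow, inv_mul_eq_div]
    have hfx : (1:ℝ) * A - B / 1 + ε * ρ (1 * A + B / 1) = 0 := by
      have := hx0
      unfold Phit mu Nfun at this
      simpa using this
    have hfy : lam ^ 2 * A - B / lam ^ 2 + ε * ρ (lam ^ 2 * A + B / lam ^ 2) = 0 := by
      have := hy0
      unfold Phit mu Nfun at this
      rw [hwy1, hwy2] at this
      exact this
    have hmono := hmono_aux hLip hA hB
    have hlam2 : lam ^ 2 = 1 := by
      apply hmono.injOn (Set.mem_Ioi.mpr (by positivity)) (Set.mem_Ioi.mpr one_pos)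
      show lam ^ 2 * A - B / lam ^ 2 + ε * ρ (lam ^ 2 * A + B / lam ^ 2)
        = (1:ℝ) * A - B / 1 + ε * ρ (1 * A + B / 1)
      rw [hfx, hfy]
    have hlam1 : lam = 1 := by
      have h3 : (lam - 1) * (lam + 1) = 0 := by linear_combination hlam2
      rcases mul_eq_zero.mp h3 with h'' | h'' <;> nlinarith
    have : y = x := by
      ext1
      · rw [hy1, hlam1, one_smul]
      · rw [hy2, hlam1, inv_one, one_smul]
    exact this.symm
  · -- SurjOn
    rintro ⟨u, v⟩ ⟨hmu0, hne⟩
    simp only [Set.mem_preimage, Set.mem_singleton_iff] at hmu0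
    unfold mu at hmu0
    simp only [Set.mem_singleton_iff] at hne
    have hu0 : u ≠ 0 := by
      intro h
      have hc0 : wnorm a u = 0 := by rw [h]; simp [wnorm]
      have hv : v = 0 := (wnorm_eq_zero_iff hb v).mp (by simp only at hmu0; linarith)
      exact hne (by rw [h, hv])
    have hv0 : v ≠ 0 := by
      intro h
      have hc0 : wnorm b v = 0 := by rw [h]; simp [wnorm]
      have hu : u = 0 := (wnorm_eq_zero_iff ha u).mp (by simp only at hmu0; linarith)
      exact hne (by rw [h, hu])
    obtain ⟨c, hcdef⟩ : ∃ c : ℝ, c = wnorm a u := ⟨_, rfl⟩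
    have hc : 0 < c := hcdef ▸ wnorm_pos ha hu0
    have hcv : wnorm b v = c := by rw [hcdef]; simp only at hmu0; linarith
    obtain ⟨T, hTdef⟩ : ∃ T : ℝ, T = 2 + δ / c := ⟨_, rfl⟩
    have hδc : 0 < δ / c := by positivity
    have hT1 : (1:ℝ) ≤ T := by rw [hTdef]; linarith
    have hT0 : (0:ℝ) < T := by linarith
    have hTc : T * c = 2 * c + δ := by
      rw [hTdef]; field_simp [hc.ne']
    have hne0 : ∀ s ∈ Set.Icc (1/T) T, s ≠ 0 := by
      intro s hs
      have h01 : (0:ℝ) < 1/T := by positivity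
      exact (lt_of_lt_of_le h01 hs.1).ne'
    have hcont : ContinuousOn (fun s : ℝ => s * c - c / s + ε * ρ (s * c + c / s))
        (Set.Icc (1/T) T) := by
      apply ContinuousOn.add
      · exact (continuousOn_id.mul continuousOn_const).sub
          (continuousOn_const.div continuousOn_id hne0)
      · exact continuousOn_const.mul (hρ.continuous.comp_continuousOn
          ((continuousOn_id.mul continuousOn_const).add
            (continuousOn_const.div continuousOn_id hne0)))
    have hfT : 0 ≤ T * c - c / T + ε * ρ (T * c + c / T) := by
      have h1 : c / T ≤ c := by
        rw [div_le_iff₀ hT0]; nlinarith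
      have h2 := abs_le.mp (hρabs (T * c + c / T))
      linarith [h2.1]
    have hf1T : (1/T) * c - c / (1/T) + ε * ρ ((1/T) * c + c / (1/T)) ≤ 0 := by
      have hd : c / (1/T) = T * c := by
        field_simp
      have h1 : (1/T) * c ≤ c := by
        have h3 : 1/T ≤ 1 := by
          rw [div_le_one hT0]; linarith
        nlinarith
      have h2 := abs_le.mp (hρabs ((1/T) * c + c / (1/T)))
      rw [hd] at h2 ⊢
      linarith [h2.2]
    have hIVT := intermediate_value_Icc
      (by rw [div_le_iff₀ hT0]; nlinarith : 1/T ≤ T) hcont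
    have h0mem : (0:ℝ) ∈ Set.Icc ((1/T) * c - c / (1/T) + ε * ρ ((1/T) * c + c / (1/T)))
        (T * c - c / T + ε * ρ (T * c + c / T)) := ⟨hf1T, hfT⟩
    obtain ⟨t₀, ht₀mem, ht₀⟩ := hIVT h0mem
    simp only at ht₀
    have ht₀pos : 0 < t₀ := lt_of_lt_of_le (by positivity : (0:ℝ) < 1/T) ht₀mem.1
    obtain ⟨s, hsdef⟩ : ∃ s : ℝ, s = Real.sqrt t₀ := ⟨_, rfl⟩
    have hs : 0 < s := hsdef ▸ Real.sqrt_pos.mpr ht₀pos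
    have hs2 : s ^ 2 = t₀ := by rw [hsdef]; exact Real.sq_sqrt ht₀pos.le
    refine ⟨(s • u, s⁻¹ • v), ⟨?_, ?_, ?_⟩, ?_⟩
    · -- Phit = 0
      show Phit a b ε ρ (s • u, s⁻¹ • v) = 0
      unfold Phit mu Nfun
      show wnorm a (s • u) - wnorm b (s⁻¹ • v)
        + ε * ρ (wnorm a (s • u) + wnorm b (s⁻¹ • v)) = 0
      rw [wnorm_smul, wnorm_smul, hcv, ← hcdef, inv_pow, hs2, inv_mul_eq_div]
      linarith [ht₀]
    · exact smul_ne_zero hs.ne' hu0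
    · exact smul_ne_zero (inv_ne_zero hs.ne') hv0
    · -- psi value
      have hz1 : (s • u, s⁻¹ • v).1 ≠ 0 := smul_ne_zero hs.ne' hu0
      have hw1 : (s • u, s⁻¹ • v).2 ≠ 0 := smul_ne_zero (inv_ne_zero hs.ne') hv0
      rw [psi_eq a b hz1 hw1]
      have hA1 : wnorm a (s • u, s⁻¹ • v).1 = t₀ * c := by
        show wnorm a (s • u) = t₀ * c
        rw [wnorm_smul, hs2, hcdef]
      have hB1 : wnorm b (s • u, s⁻¹ • v).2 = c / t₀ := by
        show wnorm b (s⁻¹ • v) = c / t₀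
        rw [wnorm_smul, hcv, inv_pow, hs2, inv_mul_eq_div]
      rw [hA1, hB1]
      have hσpos : 0 < ((c / t₀) / (t₀ * c)) ^ ((1:ℝ)/4) := Real.rpow_pos_of_pos (by positivity) _
      have hσ4 : (((c / t₀) / (t₀ * c)) ^ ((1:ℝ)/4)) ^ (4:ℕ) = (c / t₀) / (t₀ * c) :=
        rpow_quarter_pow4 (by positivity)
      have hσs : ((c / t₀) / (t₀ * c)) ^ ((1:ℝ)/4) * s = 1 := by
        apply pos_pow4_eq_one (by positivity)
        have hr : ((((c / t₀) / (t₀ * c)) ^ ((1:ℝ)/4)) * s) ^ (4:ℕ)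
            = (((c / t₀) / (t₀ * c)) ^ ((1:ℝ)/4)) ^ (4:ℕ) * (s ^ 2) ^ 2 := by ring
        rw [hr, hσ4, hs2]
        field_simp
      show ((((c / t₀) / (t₀ * c)) ^ ((1:ℝ)/4)) • (s • u),
        ((((c / t₀) / (t₀ * c)) ^ ((1:ℝ)/4))⁻¹) • (s⁻¹ • v)) = (u, v)
      rw [smul_smul, smul_smul, ← mul_inv, hσs, inv_one, one_smul, one_smul]
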